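/- arXiv:2103.16394 — 2 statements merged into one kernel-verified Lean document; each statement's English description precedes it below -/
import Mathlib

section
/- Let B be a strict 2-category and let γ be a contraction on B with center c. Then for every object a of B, the 1-cell γ_a : a ⟶ c is a terminal object of the hom-category B(a, c). In particular, every hom-category B(a, c) has a terminal object, i.e., c is quasi-terminal. -/
/-!
The 2-cell `γ_f : f ≫ γ_c ⟶ γ_a` is, since `γ_c = 𝟙 c`, a 2-cell `f ⟶ γ_a` for every
`f : a ⟶ c`. It is the only one: for `θ : f ⟶ γ_a` the 2-cell law gives
`γ_f = (θ ▷ γ_c) ≫ γ_{γ_a}`, and normality together with `γ_c = 𝟙 c` reduces the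
right-hand side to `θ`.
-/

open CategoryTheory CategoryTheory.Limits

universe w v u

/-- A contraction on a strict 2-category `B` with center `c`. -/
structure Contraction (B : Type u) [Bicategory.{w, v} B] [Bicategory.Strict B] (c : B) where
  obj : ∀ a : B, a ⟶ c
  obj_center : obj c = 𝟙 c
  app : ∀ {a b : B} (f : a ⟶ b), f ≫ obj b ⟶ obj a
  app_id : ∀ a : B, app (𝟙 a) = eqToHom (by simp)
  app_comp : ∀ {a b b' : B} (f : a ⟶ b) (g : b ⟶ b'),
    app (f ≫ g) = eqToHom (by simp) ≫ Bicategory.whiskerLeft f (app g) ≫ app f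
  app_naturality : ∀ {a b : B} {f g : a ⟶ b} (θ : f ⟶ g),
    app f = Bicategory.whiskerRight θ (obj b) ≫ app g
  app_norm : ∀ a : B, app (obj a) = eqToHom (by rw [obj_center]; simp)

lemma Bicategory.whiskerRight_eq_of_eq {B : Type u} [Bicategory.{w, v} B] {a b b' : B}
    {f g : a ⟶ b} (θ : f ⟶ g) {h h' : b ⟶ b'} (e : h = h') :
    Bicategory.whiskerRight θ h =
      eqToHom (by rw [e]) ≫ Bicategory.whiskerRight θ h' ≫ eqToHom (by rw [e]) := by
  subst e
  simp

namespace Contraction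

variable {B : Type u} [Bicategory.{w, v} B] [Bicategory.Strict B] {c : B}

def toObj (γ : Contraction B c) {a : B} (f : a ⟶ c) : f ⟶ γ.obj a :=
  eqToHom (by rw [γ.obj_center]; simp) ≫ γ.app f

lemma eq_toObj (γ : Contraction B c) {a : B} {f : a ⟶ c} (θ : f ⟶ γ.obj a) :
    θ = γ.toObj f := by
  have naturality := γ.app_naturality θ
  rw [γ.app_norm, Bicategory.whiskerRight_eq_of_eq θ γ.obj_center] at naturality
  simp only [Bicategory.Strict.rightUnitor_eqToIso, Bicategory.whiskerRight_id,
    eqToIso.hom, eqToIso.inv, Category.assoc, eqToHom_trans] at naturality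
  simp [toObj, naturality]

def isTerminalObj (γ : Contraction B c) (a : B) : IsTerminal (γ.obj a) :=
  IsTerminal.ofUniqueHom γ.toObj fun _ θ => γ.eq_toObj θ

end Contraction

/-- For every contraction `γ` with center `c` and every object `a`, the 1-cell
`γ.obj a` is terminal in the hom-category `B(a, c)`; in particular `c` is
quasi-terminal. -/
theorem contraction_obj_isTerminal {B : Type u} [Bicategory.{w, v} B]
    [Bicategory.Strict B] {c : B} (γ : Contraction B c) :
    (∀ a : B, Nonempty (IsTerminal (γ.obj a))) ∧
      (∀ a : B, ∃ t : a ⟶ c, Nonempty (IsTerminal t)) :=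
  ⟨fun a => ⟨γ.isTerminalObj a⟩, fun a => ⟨γ.obj a, ⟨γ.isTerminalObj a⟩⟩⟩
end

section
/- Let B be a strict 2-category with a marking M that is closed under isomorphism of 1-cells (i.e., whenever f ∈ M(a, b) and f ≅ f′ in the hom-category B(a, b), also f′ ∈ M(a, b)). Let γ and ρ be two contractions on B with the same center c. Then γ is an M-contraction if and only if ρ is an M-contraction. -/
open CategoryTheory CategoryTheory.Limits

universe w v u

/-- A marking on a 2-category: a collection of 1-cells containing all identities. -/
structure Marking (B : Type u) [Bicategory.{w, v} B] where
  marked : ∀ a b : B, Set (a ⟶ b)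
  id_mem : ∀ a : B, 𝟙 a ∈ marked a a


/-- A contraction `γ` is an `M`-contraction if each `γ.obj a` is marked and
`γ.app f` is invertible for every marked 1-cell `f`. -/
def Contraction.IsMContraction {B : Type u} [Bicategory.{w, v} B] [Bicategory.Strict B]
    {c : B} (M : Marking B) (γ : Contraction B c) : Prop :=
  (∀ a : B, γ.obj a ∈ M.marked a c) ∧
    (∀ {a b : B} (f : a ⟶ b), f ∈ M.marked a b → IsIso (γ.app f))

/-!
For contractions `γ`, `ρ` with a common center, `ρ_{γ_a} : γ_a ⟶ ρ_a` is an isomorphism with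
inverse `γ_{ρ_a}`: the 2-cell law for `γ` along `ρ_{γ_a}` combined with normality
`γ_{γ_a} = 𝟙` says exactly that their composite is the identity. Hence the components are
isomorphic 1-cells, so markedness transfers by closure under isomorphism. For a 1-cell `f`,
the composition law and the 2-cell law compute `ρ_{f ≫ γ_b}` in two ways:
`(f ◁ ρ_{γ_b}) ≫ ρ_f = (γ_f ▷ ρ_c) ≫ ρ_{γ_a}`, so `ρ_f` is invertible whenever `γ_f` is.
-/

open Bicategory

def Marking.IsIsoClosed {B : Type u} [Bicategory.{w, v} B] (M : Marking B) : Prop :=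
  ∀ (a b : B) (f f' : a ⟶ b), f ∈ M.marked a b → (f ≅ f') → f' ∈ M.marked a b

section

variable {B : Type u} [Bicategory.{w, v} B] [Bicategory.Strict B]

lemma Bicategory.Strict.whiskerRight_eq_of_eq_id {a b : B} {f g : a ⟶ b} (θ : f ⟶ g)
    {h : b ⟶ b} (hh : h = 𝟙 b) :
    θ ▷ h = eqToHom (by rw [hh]; simp) ≫ θ ≫ eqToHom (by rw [hh]; simp) := by
  subst hh
  simp [whiskerRight_id, Strict.rightUnitor_eqToIso]

namespace Contraction

variable {c : B} (γ ρ : Contraction B c)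

/-- The 2-cell `ρ_{γ_a}`, with its source `γ_a ≫ ρ_c` rewritten to `γ_a`. -/
def comparison (a : B) : γ.obj a ⟶ ρ.obj a :=
  eqToHom (by rw [ρ.obj_center]; simp) ≫ ρ.app (γ.obj a)

lemma comparison_comp_comparison (a : B) :
    γ.comparison ρ a ≫ ρ.comparison γ a = 𝟙 (γ.obj a) := by
  have h := γ.app_naturality (γ.comparison ρ a)
  rw [γ.app_norm, Strict.whiskerRight_eq_of_eq_id _ γ.obj_center, eq_comm, Category.assoc,
    eqToHom_comp_iff] at h
  simpa [comparison] using h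

def objIso (a : B) : γ.obj a ≅ ρ.obj a where
  hom := γ.comparison ρ a
  inv := ρ.comparison γ a
  hom_inv_id := γ.comparison_comp_comparison ρ a
  inv_hom_id := ρ.comparison_comp_comparison γ a

instance isIso_app_obj (a : B) : IsIso (ρ.app (γ.obj a)) := by
  have : ρ.app (γ.obj a) = eqToHom (by rw [ρ.obj_center]; simp) ≫ (γ.objIso ρ a).hom := by
    simp [objIso, comparison]
  rw [this]
  infer_instance

lemma isIso_app_of_isIso {a b : B} (f : a ⟶ b) [IsIso (γ.app f)] : IsIso (ρ.app f) := by
  have h : eqToHom (by simp) ≫ f ◁ ρ.app (γ.obj b) ≫ ρ.app f =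
      γ.app f ▷ ρ.obj c ≫ ρ.app (γ.obj a) :=
    (ρ.app_comp f (γ.obj b)).symm.trans (ρ.app_naturality (γ.app f))
  have : IsIso (γ.app f ▷ ρ.obj c ≫ ρ.app (γ.obj a)) := inferInstance
  rw [← h] at this
  simpa only [isIso_comp_left_iff] using this

variable {M : Marking B}

lemma IsMContraction.of_isIsoClosed (hM : M.IsIsoClosed) {γ : Contraction B c}
    (hγ : γ.IsMContraction M) (ρ : Contraction B c) : ρ.IsMContraction M := by
  obtain ⟨hobj, happ⟩ := hγ
  refine ⟨fun a ↦ hM a c _ _ (hobj a) (γ.objIso ρ a), fun f hf ↦ ?_⟩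
  have := happ f hf
  exact γ.isIso_app_of_isIso ρ f

end Contraction

end

/-- If the marking `M` is closed under isomorphism of 1-cells, then for two
contractions `γ`, `ρ` with the same center `c`, `γ` is an `M`-contraction if
and only if `ρ` is. -/
theorem isMContraction_iff_of_closed_under_iso {B : Type u} [Bicategory.{w, v} B]
    [Bicategory.Strict B] (M : Marking B)
    (hM : ∀ (a b : B) (f f' : a ⟶ b), f ∈ M.marked a b → (f ≅ f') → f' ∈ M.marked a b)
    (c : B) (γ ρ : Contraction B c) :
    Contraction.IsMContraction M γ ↔ Contraction.IsMContraction M ρ :=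
  ⟨fun h ↦ h.of_isIsoClosed hM ρ, fun h ↦ h.of_isIsoClosed hM γ⟩
end
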